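/- A 3-molecule ϑ_{B₃}^{B,h} is ambiguous (admits more than one base) if and only if one of the following holds: |B| = 3 and h = 1 (the graph is K₄); |B| = 2 and h = 2; or |B| = 0 and h = 3 (the graph is K₃,₃). -/

import Mathlib

/-!
A base `D` of the molecule other than the standard one contains every apex: an apex and a base
vertex both outside `D` would be adjacent, while the complement of a base is independent. So `D`
misses a nonempty set `S` of `h` base vertices that is independent and joined to every other base
vertex, and conversely such an `S` can be swapped with the apexes by an automorphism. With three
base vertices, `S` together with the connectivity condition (which settles `|S| = 1`) forces the
base graph to be the triangle minus the edges inside `S`, which has `3 - (h choose 2)` edges.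
-/

open SimpleGraph

/-- `G` is `m`-connected in the sense of Menger: any two distinct vertices are
joined by `m` pairwise distinct, internally disjoint paths. -/
def MengerConnected {V : Type*} (m : ℕ) (G : SimpleGraph V) : Prop :=
  ∀ u v : V, u ≠ v → ∃ P : Fin m → G.Path u v, Function.Injective P ∧
    ∀ i j, i ≠ j → ∀ x, x ∈ (P i).1.support → x ∈ (P j).1.support → x = u ∨ x = v

/-- The connectivity of a graph: the largest `m` for which it is `m`-connected.
(With this definition the connectivity of the `k`-clique is `k-1`, as in the
paper's convention.) -/
noncomputable def connectivity {V : Type*} (G : SimpleGraph V) : ℕ :=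
  sSup {m | MengerConnected m G}

/-- The `k`-molecule `ϑ_{B_k}^{Bs,h}`: its vertices are a base `B_k` of `k`
vertices (the `Sum.inl` vertices) carrying the internal edge set `Bs`, together
with `h` further vertices `v₁, …, v_h` (the `Sum.inr` vertices), each adjacent
to every base vertex and to no other non-base vertex. -/
def molecule (k h : ℕ) (Bs : SimpleGraph (Fin k)) : SimpleGraph (Fin k ⊕ Fin h) where
  Adj x y :=
    match x, y with
    | Sum.inl a, Sum.inl b => Bs.Adj a b
    | Sum.inl _, Sum.inr _ => True
    | Sum.inr _, Sum.inl _ => True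
    | Sum.inr _, Sum.inr _ => False
  symm := ⟨by rintro (a | a) (b | b) hab <;> first | exact hab.symm | trivial⟩
  loopless := ⟨by rintro (a | a) hab <;> first | exact Bs.irrefl hab | exact hab⟩

/-- `(G, A)` is a `k`-premolecule: `G` is isomorphic to a `k`-molecule via an
isomorphism sending `A` to the base. -/
def IsPremolecule {V : Type*} (k : ℕ) (G : SimpleGraph V) (A : Set V) : Prop :=
  ∃ (h : ℕ) (Bs : SimpleGraph (Fin k)) (e : G ≃g molecule k h Bs),
    1 ≤ h ∧ k - connectivity Bs ≤ h ∧
    ∀ a : V, a ∈ A ↔ ∃ i : Fin k, e a = Sum.inl i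

section Connectivity

variable {V : Type*} [Fintype V] {G : SimpleGraph V} {u v : V}

/-- The second vertices of the `m` paths are distinct and differ from `u` and `v`. -/
lemma MengerConnected.le_card_sub_two {m : ℕ} (hG : MengerConnected m G) (huv : u ≠ v)
    (hnadj : ¬G.Adj u v) : m ≤ Fintype.card V - 2 := by
  classical
  obtain ⟨P, -, hdisj⟩ := hG u v huv
  have hadj : ∀ i, G.Adj u (P i).1.snd := fun i => Walk.adj_snd ((P i).1.not_nil_of_ne huv)
  have hsnd_ne_v : ∀ i, (P i).1.snd ≠ v := fun i h => hnadj (h ▸ hadj i)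
  have hmaps : Set.MapsTo (fun i => (P i).1.snd) (Finset.univ : Finset (Fin m))
      (Finset.univ \ {u, v} : Finset V) :=
    fun i _ => by simp [(hadj i).ne', hsnd_ne_v i]
  have hinj : Set.InjOn (fun i => (P i).1.snd) (Finset.univ : Finset (Fin m)) := by
    intro i _ j _ (hij : (P i).1.getVert 1 = (P j).1.getVert 1)
    by_contra hne
    rcases hdisj i j hne _ ((P i).1.getVert_mem_support 1)
      (hij ▸ (P j).1.getVert_mem_support 1) with h | h
    · exact (hadj i).ne' h
    · exact hsnd_ne_v i h
  simpa [Finset.card_sdiff, Finset.card_pair huv] using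
    Finset.card_le_card_of_injOn _ hmaps hinj

lemma connectivity_le_card_sub_two (huv : u ≠ v) (hnadj : ¬G.Adj u v) :
    connectivity G ≤ Fintype.card V - 2 :=
  csSup_le' fun _ hm => MengerConnected.le_card_sub_two hm huv hnadj

lemma adj_of_card_sub_connectivity_le_one (hG : Fintype.card V - connectivity G ≤ 1)
    (huv : u ≠ v) : G.Adj u v := by
  by_contra hnadj
  have := connectivity_le_card_sub_two huv hnadj
  have := Fintype.one_lt_card_iff.mpr ⟨u, v, huv⟩
  omega

end Connectivity

section Molecule

variable {k h : ℕ} {Bs : SimpleGraph (Fin k)}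

@[simp] lemma molecule_adj_inl_inl (i j : Fin k) :
    (molecule k h Bs).Adj (.inl i) (.inl j) ↔ Bs.Adj i j := Iff.rfl

@[simp] lemma molecule_adj_inl_inr (i : Fin k) (j : Fin h) :
    (molecule k h Bs).Adj (.inl i) (.inr j) := trivial

@[simp] lemma molecule_adj_inr_inl (i : Fin h) (j : Fin k) :
    (molecule k h Bs).Adj (.inr i) (.inl j) := trivial

@[simp] lemma molecule_not_adj_inr_inr (i j : Fin h) :
    ¬(molecule k h Bs).Adj (.inr i) (.inr j) := id

lemma isPremolecule_range_inl (hh : 1 ≤ h) (hcond : k - connectivity Bs ≤ h) :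
    IsPremolecule k (molecule k h Bs) (Set.range Sum.inl) :=
  ⟨h, Bs, Iso.refl, hh, hcond, fun a => by simp [eq_comm]⟩

end Molecule

namespace IsPremolecule

variable {V : Type*} {k : ℕ} {G : SimpleGraph V} {A : Set V}

lemma ncard_eq (hA : IsPremolecule k G A) : A.ncard = k := by
  obtain ⟨h, Bs, e, -, -, hmem⟩ := hA
  have : A = e.symm '' Set.range Sum.inl := by
    ext a
    simp [hmem, Set.mem_image, e.symm_apply_eq, eq_comm]
  rw [this, Set.ncard_image_of_injective _ e.symm.injective,
    Set.ncard_range_of_injective Sum.inl_injective, Nat.card_eq_fintype_card, Fintype.card_fin]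

lemma exists_eq_inr_of_notMem {h : ℕ} {Bs : SimpleGraph (Fin k)} {e : G ≃g molecule k h Bs}
    (hmem : ∀ a, a ∈ A ↔ ∃ i, e a = Sum.inl i) {x : V} (hx : x ∉ A) :
    ∃ j, e x = Sum.inr j := by
  rcases hex : e x with i | j
  · exact absurd ((hmem x).mpr ⟨i, hex⟩) hx
  · exact ⟨j, rfl⟩

lemma not_adj (hA : IsPremolecule k G A) {x y : V} (hx : x ∉ A) (hy : y ∉ A) : ¬G.Adj x y := by
  obtain ⟨h, Bs, e, -, -, hmem⟩ := hA
  obtain ⟨i, hi⟩ := exists_eq_inr_of_notMem hmem hx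
  obtain ⟨j, hj⟩ := exists_eq_inr_of_notMem hmem hy
  simp [← e.map_adj_iff, hi, hj]

lemma adj (hA : IsPremolecule k G A) {x y : V} (hx : x ∉ A) (hy : y ∈ A) : G.Adj x y := by
  obtain ⟨h, Bs, e, -, -, hmem⟩ := hA
  obtain ⟨i, hi⟩ := exists_eq_inr_of_notMem hmem hx
  obtain ⟨j, hj⟩ := (hmem y).mp hy
  simp [← e.map_adj_iff, hi, hj]

end IsPremolecule

/-- The base vertices in `S` can trade places with the `h` apexes of `molecule k h Bs`. -/
def IsExchangeable {k : ℕ} (Bs : SimpleGraph (Fin k)) (h : ℕ) (S : Finset (Fin k)) : Prop :=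
  S.card = h ∧ Bs.IsIndepSet S ∧ ∀ i ∈ S, ∀ j ∉ S, Bs.Adj i j

section Exchange

variable {k h : ℕ} {Bs : SimpleGraph (Fin k)} {S : Finset (Fin k)}

lemma IsExchangeable.not_adj (hS : IsExchangeable Bs h S) {i j : Fin k} (hi : i ∈ S)
    (hj : j ∈ S) : ¬Bs.Adj i j :=
  fun hij => hS.2.1 hi hj hij.ne hij

def swapApexes (S : Finset (Fin k)) (σ : S ≃ Fin h) : Fin k ⊕ Fin h → Fin k ⊕ Fin h
  | .inl i => if hi : i ∈ S then .inr (σ ⟨i, hi⟩) else .inl i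
  | .inr j => .inl (σ.symm j)

lemma swapApexes_involutive (σ : S ≃ Fin h) : Function.Involutive (swapApexes S σ) := by
  rintro (i | j)
  · by_cases hi : i ∈ S <;> simp [swapApexes, hi]
  · simp [swapApexes]

lemma IsExchangeable.swapApexes_adj_iff (hS : IsExchangeable Bs h S) (σ : S ≃ Fin h)
    (x y : Fin k ⊕ Fin h) :
    (molecule k h Bs).Adj (swapApexes S σ x) (swapApexes S σ y) ↔
      (molecule k h Bs).Adj x y := by
  have hadj : ∀ i ∈ S, ∀ j ∉ S, Bs.Adj i j := hS.2.2
  have hadj' : ∀ i ∉ S, ∀ j ∈ S, Bs.Adj i j := fun i hi j hj => (hadj j hj i hi).symm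
  rcases x with i | i <;> rcases y with j | j
  · by_cases hi : i ∈ S <;> by_cases hj : j ∈ S <;>
      simp [swapApexes, hi, hj, hS.not_adj, hadj, hadj']
  · by_cases hi : i ∈ S <;> simp [swapApexes, hi, hadj']
  · by_cases hj : j ∈ S <;> simp [swapApexes, hj, hadj]
  · simp [swapApexes, hS.not_adj]

lemma IsExchangeable.exists_two_bases (hS : IsExchangeable Bs h S) (hne : S.Nonempty)
    (hcond : k - connectivity Bs ≤ h) :
    ∃ A B : Set (Fin k ⊕ Fin h), A ≠ B ∧
      IsPremolecule k (molecule k h Bs) A ∧ IsPremolecule k (molecule k h Bs) B := by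
  have hh : 1 ≤ h := hS.1 ▸ hne.card_pos
  let σ : S ≃ Fin h := S.equivFinOfCardEq hS.1
  let e : molecule k h Bs ≃g molecule k h Bs :=
    ⟨(swapApexes_involutive σ).toPerm _, hS.swapApexes_adj_iff σ _ _⟩
  refine ⟨_, {x | ∃ i, e x = .inl i}, ?_, isPremolecule_range_inl hh hcond,
    ⟨h, Bs, e, hh, hcond, fun _ => Iff.rfl⟩⟩
  obtain ⟨i, hi⟩ := hne
  intro hAB
  have hiB : Sum.inl i ∈ {x | ∃ i, e x = .inl i} := hAB ▸ Set.mem_range_self i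
  obtain ⟨j, hj⟩ := hiB
  change swapApexes S σ (.inl i) = .inl j at hj
  simp [swapApexes, hi] at hj

end Exchange

section Ambiguity

variable {k h : ℕ} {Bs : SimpleGraph (Fin k)}

lemma IsPremolecule.exists_isExchangeable {D : Set (Fin k ⊕ Fin h)}
    (hD : IsPremolecule k (molecule k h Bs) D) (hDC : D ≠ Set.range Sum.inl) :
    ∃ S : Finset (Fin k), S.Nonempty ∧ IsExchangeable Bs h S := by
  classical
  let S : Finset (Fin k) := {i | Sum.inl i ∉ D}
  have hmemS : ∀ i, i ∈ S ↔ Sum.inl i ∉ D := by simp [S]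
  obtain ⟨i, hi⟩ : ∃ i, Sum.inl i ∉ D := by
    by_contra! hall
    refine hDC (Set.eq_of_subset_of_ncard_le (Set.range_subset_iff.mpr hall) ?_ D.toFinite).symm
    simp [hD.ncard_eq, Set.ncard_range_of_injective Sum.inl_injective]
  have hinr : ∀ j, Sum.inr j ∈ D := fun j => by
    by_contra hj
    exact hD.not_adj hi hj (by simp)
  have hcompl : Dᶜ = Sum.inl '' S := by
    ext (j | j) <;> simp [hmemS, hinr]
  refine ⟨S, ⟨i, (hmemS i).2 hi⟩, ?_, ?_, ?_⟩
  · have := Set.ncard_add_ncard_compl D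
    rw [hD.ncard_eq, hcompl, Set.ncard_image_of_injective _ Sum.inl_injective,
      Set.ncard_coe_finset] at this
    simpa using this
  · exact fun i hi j hj _ => hD.not_adj ((hmemS i).1 hi) ((hmemS j).1 hj)
  · intro i hi j hj
    exact hD.adj (y := .inl j) ((hmemS i).1 hi) (by simpa [hmemS] using hj)

theorem molecule_ambiguous_iff (hcond : k - connectivity Bs ≤ h) :
    (∃ A B : Set (Fin k ⊕ Fin h), A ≠ B ∧
        IsPremolecule k (molecule k h Bs) A ∧ IsPremolecule k (molecule k h Bs) B) ↔
      ∃ S : Finset (Fin k), S.Nonempty ∧ IsExchangeable Bs h S := by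
  refine ⟨fun ⟨A, B, hAB, hA, hB⟩ => ?_,
    fun ⟨S, hne, hS⟩ => hS.exists_two_bases hne hcond⟩
  by_cases hAC : A = Set.range Sum.inl
  · exact hB.exists_isExchangeable fun hBC => hAB (hAC.trans hBC.symm)
  · exact hA.exists_isExchangeable hAC

end Ambiguity

section CompleteMinusClique

variable {V : Type*} [Fintype V] [DecidableEq V]

lemma ncard_edgeSet_top_deleteEdges_sym2 (S : Finset V) :
    ((⊤ : SimpleGraph V).deleteEdges ↑S.sym2).edgeSet.ncard =
      (Fintype.card V).choose 2 - S.card.choose 2 := by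
  classical
  have hinter : S.sym2 ∩ (⊤ : SimpleGraph V).edgeFinset = S.offDiag.image Sym2.mk.uncurry := by
    ext e
    induction e using Sym2.ind with
    | _ a b => aesop
  rw [← coe_edgeFinset, Set.ncard_coe_finset, edgeFinset_deleteEdges, Finset.card_sdiff,
    card_edgeFinset_top_eq_card_choose_two, hinter, Sym2.card_image_offDiag]

lemma eq_top_deleteEdges_sym2_of_isIndepSet {H : SimpleGraph V} {S : Finset V}
    (hS : H.IsIndepSet S)
    (hcard : (Fintype.card V).choose 2 - S.card.choose 2 ≤ H.edgeSet.ncard) :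
    H = (⊤ : SimpleGraph V).deleteEdges ↑S.sym2 := by
  have hle : H ≤ (⊤ : SimpleGraph V).deleteEdges ↑S.sym2 := fun i j hij => by
    simpa [hij.ne] using fun hi hj => hS hi hj hij.ne hij
  refine edgeSet_inj.mp (Set.eq_of_subset_of_ncard_le (edgeSet_mono hle) ?_ (Set.toFinite _))
  rwa [ncard_edgeSet_top_deleteEdges_sym2]

end CompleteMinusClique

lemma isExchangeable_top_deleteEdges_sym2 {k : ℕ} (S : Finset (Fin k)) :
    IsExchangeable ((⊤ : SimpleGraph (Fin k)).deleteEdges ↑S.sym2) S.card S :=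
  ⟨rfl, fun i hi j hj _ hij => by simp_all,
    fun i hi j hj => by simpa [hi, hj] using ne_of_mem_of_not_mem hi hj⟩

lemma isExchangeable_of_isIndepSet {k : ℕ} {Bs : SimpleGraph (Fin k)} {S : Finset (Fin k)}
    (hS : Bs.IsIndepSet S) (hcard : k.choose 2 - S.card.choose 2 ≤ Bs.edgeSet.ncard) :
    IsExchangeable Bs S.card S := by
  rw [eq_top_deleteEdges_sym2_of_isIndepSet hS (by simpa using hcard)]
  exact isExchangeable_top_deleteEdges_sym2 S

section FinThree

variable {Bs : SimpleGraph (Fin 3)} {h : ℕ}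

/-- Two base vertices outside `S` force `h ≤ 1`, and then the connectivity condition makes
them adjacent. -/
lemma IsExchangeable.eq_top_deleteEdges_sym2 {S : Finset (Fin 3)} (hS : IsExchangeable Bs h S)
    (hcond : 3 - connectivity Bs ≤ h) :
    Bs = (⊤ : SimpleGraph (Fin 3)).deleteEdges ↑S.sym2 := by
  ext i j
  simp only [deleteEdges_adj, top_adj, Finset.mem_coe, Finset.mk_mem_sym2_iff]
  by_cases hi : i ∈ S <;> by_cases hj : j ∈ S
  · simp [hi, hj, hS.not_adj hi hj]
  · simpa [hi, hj, hS.2.2 i hi j hj] using ne_of_mem_of_not_mem hi hj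
  · simpa [hi, hj, (hS.2.2 j hj i hi).symm] using (ne_of_mem_of_not_mem hj hi).symm
  · simp only [hi, hj, and_false, not_false_eq_true, and_true]
    refine ⟨Adj.ne, fun hij => adj_of_card_sub_connectivity_le_one ?_ hij⟩
    have hsub : S ⊆ Finset.univ \ {i, j} := fun x hx => by
      simp only [Finset.mem_sdiff, Finset.mem_univ, Finset.mem_insert, Finset.mem_singleton,
        true_and]
      rintro (rfl | rfl) <;> contradiction
    have hcard : h ≤ 1 := by
      simpa [hS.1, Finset.card_sdiff, Finset.card_pair hij] using Finset.card_le_card hsub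
    rw [Fintype.card_fin]
    omega

lemma exists_isExchangeable_iff_fin_three (hcond : 3 - connectivity Bs ≤ h) :
    (∃ S : Finset (Fin 3), S.Nonempty ∧ IsExchangeable Bs h S) ↔
      ((Bs.edgeSet.ncard = 3 ∧ h = 1) ∨ (Bs.edgeSet.ncard = 2 ∧ h = 2) ∨
        (Bs.edgeSet.ncard = 0 ∧ h = 3)) := by
  constructor
  · rintro ⟨S, hne, hS⟩
    have hE := ncard_edgeSet_top_deleteEdges_sym2 S
    rw [← hS.eq_top_deleteEdges_sym2 hcond, hS.1, Fintype.card_fin] at hE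
    have h_pos : 1 ≤ h := hS.1 ▸ hne.card_pos
    have h_le : h ≤ 3 := hS.1 ▸ S.card_le_univ.trans_eq (Fintype.card_fin 3)
    interval_cases h <;> simp [hE]
  · rintro (⟨hE, rfl⟩ | ⟨hE, rfl⟩ | ⟨hE, rfl⟩)
    · exact ⟨{0}, by simp, isExchangeable_of_isIndepSet (by simp) (by simp [hE])⟩
    · obtain ⟨p, q, hpq, hnadj⟩ : ∃ p q, p ≠ q ∧ ¬Bs.Adj p q := by
        by_contra! hall
        have htop : Bs = ⊤ := by ext p q; exact ⟨Adj.ne, hall p q⟩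
        rw [htop, ← coe_edgeFinset, Set.ncard_coe_finset,
          card_edgeFinset_top_eq_card_choose_two] at hE
        simp at hE
      refine ⟨{p, q}, by simp, ?_⟩
      have hS : Bs.IsIndepSet ({p, q} : Finset (Fin 3)) := by
        simpa [IsIndepSet, Set.pairwise_pair, hpq] using ⟨hnadj, fun hqp => hnadj hqp.symm⟩
      simpa [Finset.card_pair hpq] using isExchangeable_of_isIndepSet hS (by simp [hE, hpq])
    · have hbot : Bs = ⊥ := edgeSet_eq_empty.mp ((Set.ncard_eq_zero).mp hE)
      subst hbot
      exact ⟨Finset.univ, Finset.univ_nonempty,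
        isExchangeable_of_isIndepSet (fun _ _ _ _ _ h => h) (by simp)⟩

end FinThree

theorem three_molecule_ambiguous_iff_general (h : ℕ)
    (Bs : SimpleGraph (Fin 3)) (hcond : 3 - connectivity Bs ≤ h) :
    (∃ A B : Set (Fin 3 ⊕ Fin h), A ≠ B ∧
        IsPremolecule 3 (molecule 3 h Bs) A ∧ IsPremolecule 3 (molecule 3 h Bs) B) ↔
      ((Bs.edgeSet.ncard = 3 ∧ h = 1) ∨ (Bs.edgeSet.ncard = 2 ∧ h = 2) ∨
        (Bs.edgeSet.ncard = 0 ∧ h = 3)) := by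
  rw [molecule_ambiguous_iff hcond, exists_isExchangeable_iff_fin_three hcond]

/-- a 3-molecule `ϑ_{B₃}^{Bs,h}` is ambiguous (has more than one
base) iff either it has 3 internal edges and `h = 1` (it is `K₄`), or 2 internal
edges and `h = 2`, or no internal edge and `h = 3` (it is `K₃,₃`). -/
theorem three_molecule_ambiguous_iff (h : ℕ) (hh : 1 ≤ h)
    (Bs : SimpleGraph (Fin 3)) (hcond : 3 - connectivity Bs ≤ h) :
    (∃ A B : Set (Fin 3 ⊕ Fin h), A ≠ B ∧
        IsPremolecule 3 (molecule 3 h Bs) A ∧ IsPremolecule 3 (molecule 3 h Bs) B) ↔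
      ((Bs.edgeSet.ncard = 3 ∧ h = 1) ∨ (Bs.edgeSet.ncard = 2 ∧ h = 2) ∨
        (Bs.edgeSet.ncard = 0 ∧ h = 3)) :=
  three_molecule_ambiguous_iff_general h Bs hcond
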